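/- arXiv:1403.3223 — 3 statements merged into one kernel-verified Lean document; each statement's English description precedes it below -/
import Mathlib

section
/- Let α ∈ (0,1), μ ∈ ℝ, σ > 0 and β ∈ ℝ satisfy β > max{0, αμ + ½α(α−1)σ²}, let A be the Merton constant, and set V(x) := A·x^α for x > 0. Then for every x > 0 the stationary Hamilton–Jacobi–Bellman equation of the classical Merton problem holds: −β·V(x) + sup_{c ≥ 0} [ (μ − c)·x·V'(x) + ½σ²x²·V''(x) + (c·x)^α/α ] = 0, and the supremum is attained at c = (Aα)^(1/(α−1)). -/
/-- With A the Merton constant and V(x) = A·x^α, for every x > 0 the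
stationary HJB equation −βV(x) + sup_{c≥0}[(μ−c)xV'(x) + ½σ²x²V''(x) + (cx)^α/α] = 0
holds, the supremum being attained at c = (Aα)^(1/(α−1)). -/
theorem merton_hjb (α μ σ β A : ℝ) (hα0 : 0 < α) (hα1 : α < 1) (hσ : 0 < σ)
    (hβ : β > max 0 (α * μ + (1/2) * α * (α - 1) * σ ^ 2))
    (hA : A = (1/α) * ((β - α * μ - (1/2) * α * (α - 1) * σ ^ 2) / (1 - α)) ^ (α - 1))
    (x : ℝ) (hx : 0 < x) :
    let F : ℝ → ℝ := fun c =>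
      (μ - c) * x * (A * α * x ^ (α - 1))
      + (1/2) * σ ^ 2 * x ^ 2 * (A * α * (α - 1) * x ^ (α - 2))
      + (c * x) ^ α / α
    IsGreatest (F '' Set.Ici 0) (F ((A * α) ^ (1 / (α - 1)))) ∧
    -β * (A * x ^ α) + F ((A * α) ^ (1 / (α - 1))) = 0 := by
  intro F
  have h1α : 0 < 1 - α := by linarith
  have hαne : α ≠ 0 := ne_of_gt hα0
  have hα1ne : α - 1 ≠ 0 := by intro h; apply hα1.ne; linarith
  set K : ℝ := (β - α * μ - (1/2) * α * (α - 1) * σ ^ 2) / (1 - α) with hKdef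
  have hnum : 0 < β - α * μ - (1/2) * α * (α - 1) * σ ^ 2 := by
    have h := lt_of_le_of_lt (le_max_right 0 (α * μ + (1/2) * α * (α - 1) * σ ^ 2)) hβ
    linarith
  have hK : 0 < K := div_pos hnum h1α
  have hKnum : (1 - α) * K = β - α * μ - (1/2) * α * (α - 1) * σ ^ 2 := by
    rw [hKdef]; field_simp
  have hAα : A * α = K ^ (α - 1) := by
    rw [hA]; field_simp
  have hcstar : (A * α) ^ (1 / (α - 1)) = K := by
    rw [hAα, ← Real.rpow_mul hK.le, mul_one_div_cancel hα1ne, Real.rpow_one]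
  -- powers of x
  set P : ℝ := x ^ α with hPdef
  have hP : 0 < P := Real.rpow_pos_of_pos hx α
  have hx1 : x * x ^ (α - 1) = P := by
    have h := Real.rpow_add hx 1 (α - 1)
    rw [Real.rpow_one] at h
    rw [← h, hPdef]
    congr 1; ring
  have hx2 : x ^ 2 * x ^ (α - 2) = P := by
    have h := Real.rpow_natCast x 2
    rw [← h, ← Real.rpow_add hx, hPdef]
    congr 1; push_cast; ring
  -- normal form for F
  have hF : ∀ c : ℝ, 0 ≤ c →
      F c = (μ - c) * (A * α) * P + (1/2) * σ^2 * (A * α * (α - 1)) * P + c ^ α * P / α := by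
    intro c hc
    show (μ - c) * x * (A * α * x ^ (α - 1))
      + (1/2) * σ ^ 2 * x ^ 2 * (A * α * (α - 1) * x ^ (α - 2))
      + (c * x) ^ α / α = _
    rw [Real.mul_rpow hc hx.le, ← hPdef]
    linear_combination ((μ - c) * (A * α)) * hx1 + ((1/2) * σ^2 * (A * α * (α - 1))) * hx2
  -- powers of K
  have hKα : K * K ^ (α - 1) = K ^ α := by
    nth_rewrite 1 [← Real.rpow_one K]
    rw [← Real.rpow_add hK]
    congr 1; ring
  -- key inequality (first-order optimality / concavity)
  have key : ∀ c : ℝ, 0 ≤ c → c ^ α / α ≤ c * K ^ (α - 1) + K ^ α / α - K ^ α := by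
    intro c hc
    have hgm := Real.geom_mean_le_arith_mean2_weighted hα0.le h1α.le hc hK.le (by ring)
    have hpow : K ^ (1 - α) * K ^ (α - 1) = 1 := by
      rw [← Real.rpow_add hK, show (1 - α) + (α - 1) = 0 by ring, Real.rpow_zero]
    have h2 : (c ^ α * K ^ (1 - α)) * K ^ (α - 1) ≤ (α * c + (1 - α) * K) * K ^ (α - 1) :=
      mul_le_mul_of_nonneg_right hgm (Real.rpow_pos_of_pos hK _).le
    have h3 : c ^ α ≤ α * (c * K ^ (α - 1)) + (1 - α) * K ^ α := by
      calc c ^ α = (c ^ α * K ^ (1 - α)) * K ^ (α - 1) := by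
              rw [mul_assoc, hpow, mul_one]
        _ ≤ (α * c + (1 - α) * K) * K ^ (α - 1) := h2
        _ = α * (c * K ^ (α - 1)) + (1 - α) * (K * K ^ (α - 1)) := by ring
        _ = α * (c * K ^ (α - 1)) + (1 - α) * K ^ α := by rw [hKα]
    rw [div_le_iff₀ hα0, sub_mul, add_mul, div_mul_cancel₀ _ hαne]
    linarith
  rw [hcstar]
  have hKA : K ^ α = K * (A * α) := by rw [hAα, hKα]
  constructor
  · constructor
    · exact ⟨K, Set.mem_Ici.mpr hK.le, rfl⟩
    · rintro y ⟨c, hc, rfl⟩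
      rw [hF c (Set.mem_Ici.mp hc), hF K hK.le, hAα]
      have h4 := mul_le_mul_of_nonneg_right (key c (Set.mem_Ici.mp hc)) hP.le
      have h5 : K ^ α * P = K * K ^ (α - 1) * P := by rw [hKα]
      clear_value K P
      ring_nf at h4 h5 ⊢
      linarith
  · rw [hF K hK.le]
    have hKA2 : K ^ α / α = K * A := by
      rw [hKA]; field_simp
    linear_combination P * hKA2 + (A * P) * hKnum
end

section
/- Let α ∈ (0,1), μ, μ̃ ∈ ℝ, σ, σ̃ > 0 and β > max{0, αμ + ½α(α−1)σ²}, let A be the Merton constant, and set φ(x,y) := A·(x+y)^α. Then for all x, y > 0, the inequality −β·φ(x,y) + sup_{c ≥ 0} [ (μ−c)·x·∂φ/∂x + μ̃·y·∂φ/∂y + ½σ²x²·∂²φ/∂x² + ½σ̃²y²·∂²φ/∂y² + (c·x)^α/α ] ≤ 0 holds if and only if, with z := x/y, [ μ̃ − μ − (α−1)σ² ]·z + μ̃ − μ + ½(α−1)(σ̃² − σ²) ≤ 0. -/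
set_option maxHeartbeats 1000000

lemma young_aux (α : ℝ) (hα0 : 0 < α) (hα1 : α < 1) (t r : ℝ) (ht : 0 ≤ t) (hr : 0 < r) :
    t ^ α ≤ α * (t * r ^ (α - 1)) + (1 - α) * r ^ α := by
  have hp1 : 0 ≤ t * r ^ (α - 1) := mul_nonneg ht (Real.rpow_pos_of_pos hr _).le
  have hp2 : (0:ℝ) ≤ r ^ α := (Real.rpow_pos_of_pos hr _).le
  have h := Real.geom_mean_le_arith_mean2_weighted (w₂ := 1 - α) (p₂ := r ^ α) hα0.le
    (by linarith) hp1 hp2 (by ring)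
  have e : (t * r ^ (α - 1)) ^ α * (r ^ α) ^ (1 - α) = t ^ α := by
    rw [Real.mul_rpow ht (Real.rpow_pos_of_pos hr _).le, ← Real.rpow_mul hr.le,
      ← Real.rpow_mul hr.le, mul_assoc, ← Real.rpow_add hr]
    have : (α - 1) * α + α * (1 - α) = 0 := by ring
    rw [this, Real.rpow_zero, mul_one]
  rw [e] at h
  exact h

/-- For φ(x,y) = A(x+y)^α with A the Merton constant, the verification
inequality −βφ + sup_{c≥0}[(μ−c)xφ_x + μ̃yφ_y + ½σ²x²φ_xx + ½σ̃²y²φ_yy + (cx)^α/α] ≤ 0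
holds iff, with z = x/y, [μ̃ − μ − (α−1)σ²]z + μ̃ − μ + ½(α−1)(σ̃² − σ²) ≤ 0. -/
theorem verification_outside_continuation (α μ μt σ σt β A : ℝ)
    (hα0 : 0 < α) (hα1 : α < 1) (hσ : 0 < σ) (hσt : 0 < σt)
    (hβ : β > max 0 (α * μ + (1/2) * α * (α - 1) * σ ^ 2))
    (hA : A = (1/α) * ((β - α * μ - (1/2) * α * (α - 1) * σ ^ 2) / (1 - α)) ^ (α - 1))
    (x y : ℝ) (hx : 0 < x) (hy : 0 < y) :
    (-β * (A * (x + y) ^ α) +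
      sSup ((fun c : ℝ =>
        (μ - c) * x * (A * α * (x + y) ^ (α - 1))
        + μt * y * (A * α * (x + y) ^ (α - 1))
        + (1/2) * σ ^ 2 * x ^ 2 * (A * α * (α - 1) * (x + y) ^ (α - 2))
        + (1/2) * σt ^ 2 * y ^ 2 * (A * α * (α - 1) * (x + y) ^ (α - 2))
        + (c * x) ^ α / α) '' Set.Ici 0) ≤ 0)
    ↔ (μt - μ - (α - 1) * σ ^ 2) * (x / y) + μt - μ
        + (1/2) * (α - 1) * (σt ^ 2 - σ ^ 2) ≤ 0 := by
  have h1α : (0:ℝ) < 1 - α := by linarith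
  have hα' : α ≠ 0 := hα0.ne'
  have hD : 0 < β - α * μ - (1/2) * α * (α - 1) * σ ^ 2 := by
    have h := le_max_right (0:ℝ) (α * μ + (1/2) * α * (α - 1) * σ ^ 2)
    linarith [lt_of_le_of_lt h hβ]
  set C : ℝ := (β - α * μ - (1/2) * α * (α - 1) * σ ^ 2) / (1 - α) with hCdef
  have hC : 0 < C := div_pos hD h1α
  have hS : 0 < x + y := by linarith
  set S : ℝ := x + y with hSdef
  have hβe : β = C * (1 - α) + α * μ + (1/2) * α * (α - 1) * σ ^ 2 := by
    rw [hCdef]; field_simp; ring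
  clear_value C S
  have hr : 0 < C * S := mul_pos hC hS
  have hne : (1:ℝ) + (α - 1) ≠ 0 := by
    intro h; exact hα' (by linarith)
  have hAe : A = C ^ (α - 1) / α := by rw [hA]; ring
  have hAα : A * α = C ^ (α - 1) := by
    rw [hAe]; exact div_mul_cancel₀ _ hα'
  have eB : A * α * S ^ (α - 1) = (C * S) ^ (α - 1) := by
    rw [hAα, ← Real.mul_rpow hC.le hS.le]
  have eCS : C * S / x * x = C * S := by field_simp
  set f : ℝ → ℝ := fun c : ℝ =>
        (μ - c) * x * (A * α * S ^ (α - 1))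
        + μt * y * (A * α * S ^ (α - 1))
        + (1/2) * σ ^ 2 * x ^ 2 * (A * α * (α - 1) * S ^ (α - 2))
        + (1/2) * σt ^ 2 * y ^ 2 * (A * α * (α - 1) * S ^ (α - 2))
        + (c * x) ^ α / α with hf
  have hprod : C * S * (C * S) ^ (α - 1) = (C * S) ^ α := by
    rw [← Real.rpow_one_add' hr.le hne]
    norm_num
  have hgr : IsGreatest (f '' Set.Ici 0) (f (C * S / x)) := by
    constructor
    · exact ⟨C * S / x, Set.mem_Ici.2 (by positivity), rfl⟩
    · rintro v ⟨c, hc, rfl⟩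
      simp only [hf]
      have hc0 : (0:ℝ) ≤ c := hc
      have hy1 := young_aux α hα0 hα1 (c * x) (C * S) (mul_nonneg hc0 hx.le) hr
      have hcs : (C * S / x * x) ^ α = (C * S) ^ α := by rw [eCS]
      have h3 : (μ - C * S / x) * x * (C * S) ^ (α - 1)
          = μ * x * (C * S) ^ (α - 1) - (C * S) * (C * S) ^ (α - 1) := by
        field_simp
      have h8 : (μ - c) * x * (C * S) ^ (α - 1)
          = μ * x * (C * S) ^ (α - 1) - c * x * (C * S) ^ (α - 1) := by ring
      have e7 : (c * x) ^ α / α - c * x * (C * S) ^ (α - 1)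
          - ((C * S) ^ α / α - (C * S) ^ α)
          = ((c * x) ^ α - (α * (c * x * (C * S) ^ (α - 1)) + (1 - α) * (C * S) ^ α)) / α := by
        field_simp; ring
      have h7 : ((c * x) ^ α - (α * (c * x * (C * S) ^ (α - 1)) + (1 - α) * (C * S) ^ α)) / α
          ≤ 0 := div_nonpos_of_nonpos_of_nonneg (by linarith) hα0.le
      have h6 : (c * x) ^ α / α - c * x * (C * S) ^ (α - 1)
          ≤ (C * S) ^ α / α - (C * S) ^ α := by linarith [e7 ▸ h7]
      rw [eB, hcs, h3, h8]
      linarith [hprod]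
  rw [hgr.csSup_eq]
  have eS1 : S ^ (α - 1) = S ^ α / S := by
    rw [Real.rpow_sub hS, Real.rpow_one]
  have eS2 : S ^ (α - 2) = S ^ α / S ^ 2 := by
    rw [Real.rpow_sub hS, Real.rpow_two]
  have eCa : (C * S) ^ α = C * C ^ (α - 1) * S ^ α := by
    rw [Real.mul_rpow hC.le hS.le, ← Real.rpow_one_add' hC.le hne]
    norm_num
  have hT : 0 < S ^ α := Real.rpow_pos_of_pos hS α
  have hP : 0 < C ^ (α - 1) := Real.rpow_pos_of_pos hC _
  have key : -β * (A * S ^ α) + f (C * S / x)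
      = (C ^ (α - 1) * S ^ α * y ^ 2 / S ^ 2) *
        ((μt - μ - (α - 1) * σ ^ 2) * (x / y) + μt - μ
        + (1/2) * (α - 1) * (σt ^ 2 - σ ^ 2)) := by
    simp only [hf]
    rw [eCS, eCa, eS1, eS2, hAe, hβe]
    rw [hSdef]
    field_simp
    ring
  rw [key]
  have hfac : 0 < C ^ (α - 1) * S ^ α * y ^ 2 / S ^ 2 := by positivity
  constructor
  · intro h
    by_contra hcon
    push_neg at hcon
    nlinarith [mul_pos hfac hcon]
  · intro h
    exact mul_nonpos_of_nonneg_of_nonpos hfac.le h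
end

section
/- Let α ∈ (0,1), μ, μ̃, β ∈ ℝ and σ, σ̃ > 0, let K : (0,∞) → ℝ be twice continuously differentiable with K'(z) > 0 for all z > 0, and define ψ(x,y) := y^α·K(x/y) for x, y > 0. Then for all x, y > 0, writing z := x/y: −β·ψ(x,y) + sup_{c ≥ 0} [ (μ−c)·x·∂ψ/∂x + μ̃·y·∂ψ/∂y + ½σ²x²·∂²ψ/∂x² + ½σ̃²y²·∂²ψ/∂y² + (c·x)^α/α ] = y^α · [ ½(σ² + σ̃²)·z²·K''(z) + (μ − μ̃ + (1−α)σ̃²)·z·K'(z) + (−β + αμ̃ + ½α(α−1)σ̃²)·K(z) + ((1−α)/α)·(K'(z))^(α/(α−1)) ], and the supremum is attained at c = (y/x)·(K'(z))^(1/(α−1)). In particular, ψ satisfies the Hamilton–Jacobi–Bellman equation −βψ + sup_{c≥0}[...] = 0 at (x,y) if and only if K satisfies the ordinary differential equation ½(σ²+σ̃²)z²K''(z) + (μ−μ̃+(1−α)σ̃²)zK'(z) + (−β+αμ̃+½α(α−1)σ̃²)K(z) + ((1−α)/α)(K'(z))^(α/(α−1)) = 0 at z = x/y. -/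
/-!
Since `ψ` is homogeneous of degree `α`, each of its partial derivatives up to order two is a
power of `y` times a function of `z = x / y`, so the uncontrolled part of the Hamiltonian is
`y ^ α` times the linear part of the ODE. The control only enters through
`(c x) ^ α / α - (c x) p` with `p = ψ_x = y ^ (α - 1) K'(z) > 0`; its supremum over `c x ≥ 0`
is the concave conjugate `(1 - α) / α · p ^ (α / (α - 1))` of `u ↦ u ^ α / α`, attained at
`c x = p ^ (1 / (α - 1))`, and by homogeneity again this equals `y ^ α` times the nonlinear term.
-/

open Real Set Filter Topology

section Conjugate

variable {α p u : ℝ}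

theorem rpow_div_sub_mul_le (hα0 : 0 < α) (hα1 : α < 1) (hp : 0 < p) (hu : 0 ≤ u) :
    u ^ α / α - u * p ≤ (1 - α) / α * p ^ (α / (α - 1)) := by
  -- weighted AM-GM for `u p` and `p ^ (α / (α - 1))`, whose weighted geometric mean is `u`
  have amgm := geom_mean_le_arith_mean2_weighted hα0.le (sub_nonneg.2 hα1.le)
    (mul_nonneg hu hp.le) (rpow_nonneg hp.le (α / (α - 1))) (add_sub_cancel α 1)
  have hgeom : (u * p) ^ α * (p ^ (α / (α - 1))) ^ (1 - α) = u ^ α := by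
    rw [mul_rpow hu hp.le, ← rpow_mul hp.le, mul_assoc, ← rpow_add hp,
      show α + α / (α - 1) * (1 - α) = 0 by field_simp [sub_ne_zero.2 hα1.ne]; ring,
      rpow_zero, mul_one]
  rw [hgeom] at amgm
  rw [sub_le_iff_le_add, div_le_iff₀ hα0]
  have hcancel : (1 - α) / α * p ^ (α / (α - 1)) * α = (1 - α) * p ^ (α / (α - 1)) := by
    field_simp
  linarith

theorem rpow_div_sub_mul_eq_of_eq_rpow (hα0 : α ≠ 0) (hα1 : α ≠ 1) (hp : 0 < p)
    (hu : u = p ^ (1 / (α - 1))) :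
    u ^ α / α - u * p = (1 - α) / α * p ^ (α / (α - 1)) := by
  have hα1' : α - 1 ≠ 0 := sub_ne_zero.2 hα1
  have hpow : u ^ α = p ^ (α / (α - 1)) := by
    rw [hu, ← rpow_mul hp.le, one_div_mul_eq_div]
  have hmul : u * p = p ^ (α / (α - 1)) := by
    rw [hu, ← rpow_add_one hp.ne', show 1 / (α - 1) + 1 = α / (α - 1) by field_simp; ring]
  rw [hpow, hmul]
  field_simp

end Conjugate

theorem rpow_sub_one_mul_rpow_div {α a q r : ℝ} (hα1 : α ≠ 1) (ha : 0 < a) (hq : 0 ≤ q) :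
    (a ^ (α - 1) * q) ^ (r / (α - 1)) = a ^ r * q ^ (r / (α - 1)) := by
  rw [mul_rpow (rpow_nonneg ha.le _) hq, ← rpow_mul ha.le,
    mul_div_cancel₀ r (sub_ne_zero.2 hα1)]

section Homogeneous

variable {G : ℝ → ℝ} {g γ a b : ℝ}

theorem hasDerivAt_rpow_mul_comp_div_left (hb : b ≠ 0) (hG : HasDerivAt G g (a / b)) :
    HasDerivAt (fun t => b ^ γ * G (t / b)) (b ^ (γ - 1) * g) a := by
  refine ((hG.comp a ((hasDerivAt_id a).div_const b)).const_mul (b ^ γ)).congr_deriv ?_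
  rw [rpow_sub_one hb]
  field_simp

theorem hasDerivAt_rpow_mul_comp_div_right (hb : b ≠ 0) (hG : HasDerivAt G g (a / b)) :
    HasDerivAt (fun t => t ^ γ * G (a / t)) (b ^ (γ - 1) * (γ * G (a / b) - a / b * g)) b := by
  have hdiv : HasDerivAt (fun t => a / t) (-(a / b ^ 2)) b := by
    simpa [div_eq_mul_inv] using (hasDerivAt_inv hb).const_mul a
  refine ((hasDerivAt_rpow_const (p := γ) (Or.inl hb)).mul (hG.comp b hdiv)).congr_deriv ?_
  rw [rpow_sub_one hb, Function.comp_apply]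
  field_simp
  ring

end Homogeneous

section HomogeneousDerivatives

variable {K K' K'' : ℝ → ℝ} {α x y : ℝ}

theorem deriv_rpow_mul_comp_div_left_eventuallyEq (hK : ∀ z > 0, HasDerivAt K (K' z) z)
    (hx : 0 < x) (hy : 0 < y) :
    (fun s => deriv (fun t => y ^ α * K (t / y)) s) =ᶠ[𝓝 x]
      fun s => y ^ (α - 1) * K' (s / y) := by
  filter_upwards [Ioi_mem_nhds hx] with s hs
  exact (hasDerivAt_rpow_mul_comp_div_left hy.ne' (hK _ (div_pos hs hy))).deriv

theorem deriv_rpow_mul_comp_div_right_eventuallyEq (hK : ∀ z > 0, HasDerivAt K (K' z) z)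
    (hx : 0 < x) (hy : 0 < y) :
    (fun s => deriv (fun t => t ^ α * K (x / t)) s) =ᶠ[𝓝 y]
      fun s => s ^ (α - 1) * (α * K (x / s) - x / s * K' (x / s)) := by
  filter_upwards [Ioi_mem_nhds hy] with s hs
  exact (hasDerivAt_rpow_mul_comp_div_right hs.ne' (hK _ (div_pos hx hs))).deriv

theorem deriv_deriv_rpow_mul_comp_div_left (hK : ∀ z > 0, HasDerivAt K (K' z) z)
    (hK' : HasDerivAt K' (K'' (x / y)) (x / y)) (hx : 0 < x) (hy : 0 < y) :
    deriv (fun s => deriv (fun t => y ^ α * K (t / y)) s) x = y ^ (α - 1 - 1) * K'' (x / y) := by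
  rw [(deriv_rpow_mul_comp_div_left_eventuallyEq hK hx hy).deriv_eq]
  exact (hasDerivAt_rpow_mul_comp_div_left hy.ne' hK').deriv

theorem deriv_deriv_rpow_mul_comp_div_right (hK : ∀ z > 0, HasDerivAt K (K' z) z)
    (hK' : HasDerivAt K' (K'' (x / y)) (x / y)) (hx : 0 < x) (hy : 0 < y) :
    deriv (fun s => deriv (fun t => t ^ α * K (x / t)) s) y =
      y ^ (α - 1 - 1) * ((α - 1) * (α * K (x / y) - x / y * K' (x / y))
        - x / y * (α * K' (x / y) - (K' (x / y) + x / y * K'' (x / y)))) := by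
  rw [(deriv_rpow_mul_comp_div_right_eventuallyEq hK hx hy).deriv_eq]
  have hG : HasDerivAt (fun z => α * K z - z * K' z)
      (α * K' (x / y) - (K' (x / y) + x / y * K'' (x / y))) (x / y) := by
    refine ((hK _ (div_pos hx hy)).const_mul α).sub (((hasDerivAt_id _).mul hK').congr_deriv ?_)
    simp
  exact (hasDerivAt_rpow_mul_comp_div_right hy.ne' hG).deriv

end HomogeneousDerivatives

theorem hjb_reduction_to_ode_general (α μ μt σ σt β : ℝ)
    (hα0 : 0 < α) (hα1 : α < 1)
    (K K' K'' : ℝ → ℝ)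
    (hK : ∀ z > 0, HasDerivAt K (K' z) z)
    (hK' : ∀ z > 0, HasDerivAt K' (K'' z) z)
    (hKpos : ∀ z > 0, 0 < K' z)
    (x y : ℝ) (hx : 0 < x) (hy : 0 < y) :
    let z : ℝ := x / y
    let ψ : ℝ → ℝ → ℝ := fun a b => b ^ α * K (a / b)
    let F : ℝ → ℝ := fun c =>
      (μ - c) * x * deriv (fun x' => ψ x' y) x
      + μt * y * deriv (fun y' => ψ x y') y
      + (1/2) * σ ^ 2 * x ^ 2 * deriv (fun x' => deriv (fun t => ψ t y) x') x
      + (1/2) * σt ^ 2 * y ^ 2 * deriv (fun y' => deriv (fun t => ψ x t) y') y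
      + (c * x) ^ α / α
    let E : ℝ := (1/2) * (σ ^ 2 + σt ^ 2) * z ^ 2 * K'' z
      + (μ - μt + (1 - α) * σt ^ 2) * z * K' z
      + (-β + α * μt + (1/2) * α * (α - 1) * σt ^ 2) * K z
      + ((1 - α) / α) * (K' z) ^ (α / (α - 1))
    (-β * ψ x y + sSup (F '' Set.Ici 0) = y ^ α * E) ∧
    IsGreatest (F '' Set.Ici 0) (F ((y / x) * (K' z) ^ (1 / (α - 1)))) ∧
    ((-β * ψ x y + sSup (F '' Set.Ici 0) = 0) ↔ E = 0) := by
  intro z ψ F E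
  have hz : 0 < z := div_pos hx hy
  set p := y ^ (α - 1) * K' z
  have hp : 0 < p := mul_pos (rpow_pos_of_pos hy _) (hKpos z hz)
  have hF : ∀ c, F c = y ^ α * ((1/2) * (σ ^ 2 + σt ^ 2) * z ^ 2 * K'' z
      + (μ - μt + (1 - α) * σt ^ 2) * z * K' z
      + (α * μt + (1/2) * α * (α - 1) * σt ^ 2) * K z)
      + ((c * x) ^ α / α - c * x * p) := by
    intro c
    simp only [F, ψ, p, z, (deriv_rpow_mul_comp_div_left_eventuallyEq hK hx hy).eq_of_nhds,
      (deriv_rpow_mul_comp_div_right_eventuallyEq hK hx hy).eq_of_nhds,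
      deriv_deriv_rpow_mul_comp_div_left hK (hK' z hz) hx hy,
      deriv_deriv_rpow_mul_comp_div_right hK (hK' z hz) hx hy, rpow_sub_one hy.ne']
    field_simp
    ring
  have hc₀ : y / x * K' z ^ (1 / (α - 1)) * x = p ^ (1 / (α - 1)) := by
    rw [rpow_sub_one_mul_rpow_div hα1.ne hy (hKpos z hz).le, rpow_one]
    field_simp
  have hgreat : IsGreatest (F '' Ici 0) (F (y / x * K' z ^ (1 / (α - 1)))) := by
    have hc₀_nonneg : 0 ≤ y / x * K' z ^ (1 / (α - 1)) :=
      mul_nonneg (div_pos hy hx).le (rpow_nonneg (hKpos z hz).le _)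
    refine ⟨mem_image_of_mem F hc₀_nonneg, forall_mem_image.2 fun c hc => ?_⟩
    rw [hF, hF, rpow_div_sub_mul_eq_of_eq_rpow hα0.ne' hα1.ne hp hc₀]
    gcongr
    exact rpow_div_sub_mul_le hα0 hα1 hp (mul_nonneg hc hx.le)
  have hmain : -β * ψ x y + sSup (F '' Ici 0) = y ^ α * E := by
    rw [hgreat.csSup_eq, hF, rpow_div_sub_mul_eq_of_eq_rpow hα0.ne' hα1.ne hp hc₀,
      rpow_sub_one_mul_rpow_div hα1.ne hy (hKpos z hz).le]
    ring
  refine ⟨hmain, hgreat, ?_⟩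
  rw [hmain, mul_eq_zero, or_iff_right (rpow_pos_of_pos hy α).ne']

/-- Reduction of the two-dimensional HJB equation of the modified Merton
problem to a one-dimensional ODE: for ψ(x,y) = y^α K(x/y), with z = x/y,
−βψ + sup_{c≥0}[(μ−c)xψ_x + μ̃yψ_y + ½σ²x²ψ_xx + ½σ̃²y²ψ_yy + (cx)^α/α]
= y^α·[½(σ²+σ̃²)z²K'' + (μ−μ̃+(1−α)σ̃²)zK' + (−β+αμ̃+½α(α−1)σ̃²)K + ((1−α)/α)(K')^(α/(α−1))],
the supremum is attained at c = (y/x)(K'(z))^(1/(α−1)), and the HJB equation holds at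
(x,y) iff the ODE holds at z. -/
theorem hjb_reduction_to_ode (α μ μt σ σt β : ℝ)
    (hα0 : 0 < α) (hα1 : α < 1) (hσ : 0 < σ) (hσt : 0 < σt)
    (K K' K'' : ℝ → ℝ)
    (hK : ∀ z > 0, HasDerivAt K (K' z) z)
    (hK' : ∀ z > 0, HasDerivAt K' (K'' z) z)
    (hK'' : ContinuousOn K'' (Set.Ioi 0))
    (hKpos : ∀ z > 0, 0 < K' z)
    (x y : ℝ) (hx : 0 < x) (hy : 0 < y) :
    let z : ℝ := x / y
    let ψ : ℝ → ℝ → ℝ := fun a b => b ^ α * K (a / b)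
    let F : ℝ → ℝ := fun c =>
      (μ - c) * x * deriv (fun x' => ψ x' y) x
      + μt * y * deriv (fun y' => ψ x y') y
      + (1/2) * σ ^ 2 * x ^ 2 * deriv (fun x' => deriv (fun t => ψ t y) x') x
      + (1/2) * σt ^ 2 * y ^ 2 * deriv (fun y' => deriv (fun t => ψ x t) y') y
      + (c * x) ^ α / α
    let E : ℝ := (1/2) * (σ ^ 2 + σt ^ 2) * z ^ 2 * K'' z
      + (μ - μt + (1 - α) * σt ^ 2) * z * K' z
      + (-β + α * μt + (1/2) * α * (α - 1) * σt ^ 2) * K z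
      + ((1 - α) / α) * (K' z) ^ (α / (α - 1))
    (-β * ψ x y + sSup (F '' Set.Ici 0) = y ^ α * E) ∧
    IsGreatest (F '' Set.Ici 0) (F ((y / x) * (K' z) ^ (1 / (α - 1)))) ∧
    ((-β * ψ x y + sSup (F '' Set.Ici 0) = 0) ↔ E = 0) :=
  hjb_reduction_to_ode_general α μ μt σ σt β hα0 hα1 K K' K'' hK hK' hKpos x y hx hy
end
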